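/- The solution map ξ : [0,∞] × ℝ² × D² → D² of the unreflected auxiliary system (sending (B,b,y) to the unique solution w) is continuous with respect to the product topology, when [0,∞] is equipped with the order topology and D with the topology of uniform convergence over bounded intervals; moreover, if y is continuous then so is w = ξ(B,b,y). -/

import Mathlib

/-! For two solutions `w, w'`, the regulator `ψ_κ` is 1-Lipschitz for the uniform norm, so
`F₁ t = ‖w'₁ - w₁‖_t` and `F₂ t = ‖w'₂ - w₂‖_t` satisfy
`F₁ t ≤ a₁ + ∫₀ᵗ G` and `F₂ t ≤ a₂ + F₁ t + ∫₀ᵗ G` with `G = 2 (F₁ + F₂) + c`, where `aᵢ` bounds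
the change of the data `bᵢ + yᵢ` on `[0, t]` and `c = ‖ψ_{B'}(w₂) - ψ_B(w₂)‖_t`. Gronwall's
inequality then bounds `F₁ + F₂` linearly in `a₁, a₂, c`, and `c → 0` as `B' → B` in `[0, ∞]`.
Continuity of `w` for continuous `y` is read off the equations: primitives of integrable functions
and running suprema of continuous functions are continuous. -/

open MeasureTheory Filter Set
open scoped ENNReal

noncomputable section

/-- `f` is càdlàg on `[0,∞)`: right-continuous at every `t ≥ 0` and possessing
finite left limits at every `t > 0`.  (Values on `(-∞,0)` are irrelevant.) -/
def Cadlag (f : ℝ → ℝ) : Prop :=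
  (∀ t : ℝ, 0 ≤ t → ContinuousWithinAt f (Set.Ici t) t) ∧
    (∀ t : ℝ, 0 < t → ∃ L : ℝ, Filter.Tendsto f (nhdsWithin t (Set.Iio t)) (nhds L))

/-- Uniform norm of `x` on `[0,t]`: `‖x‖_t = sup_{0 ≤ s ≤ t} |x(s)|`. -/
def unif (x : ℝ → ℝ) (t : ℝ) : ℝ := ⨆ s : Set.Icc (0:ℝ) t, |x s.1|

/-- Regulator of the one-sided reflection map with upper barrier `κ ∈ ℝ`:
`ψ_κ(x)(t) = sup_{0 ≤ s ≤ t} (x(s) - κ)⁺`. -/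
def psiR (κ : ℝ) (x : ℝ → ℝ) (t : ℝ) : ℝ := ⨆ s : Set.Icc (0:ℝ) t, max (x s.1 - κ) 0

/-- One-sided reflection map with upper barrier `κ ∈ ℝ`: `φ_κ(x) = x - ψ_κ(x)`. -/
def phiR (κ : ℝ) (x : ℝ → ℝ) (t : ℝ) : ℝ := x t - psiR κ x t

/-- Regulator for a barrier `κ ∈ [0,∞]`; for `κ = ∞` it is identically `0`. -/
def psiE (κ : ℝ≥0∞) (x : ℝ → ℝ) : ℝ → ℝ := if κ = ⊤ then 0 else psiR κ.toReal x

/-- Reflection map for a barrier `κ ∈ [0,∞]`; for `κ = ∞` it is the identity. -/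
def phiE (κ : ℝ≥0∞) (x : ℝ → ℝ) : ℝ → ℝ := if κ = ⊤ then x else phiR κ.toReal x

/-- "`∫ 𝟙_S du = 0`": every Stieltjes function agreeing with the
(constant-below-zero extension of) `u` assigns measure zero to `S`. -/
def ZeroStieltjesOn (u : ℝ → ℝ) (S : Set ℝ) : Prop :=
  ∀ sf : StieltjesFunction ℝ, (∀ t : ℝ, sf t = u (max t 0)) → sf.measure S = 0

/-- `u₁, u₂` is a valid pair of regulator processes for `x₁` (barrier `0` from above)
and `x₂` (upper barrier `B ∈ [0,∞]`): nondecreasing nonnegative elements of `D` with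
`∫₀^∞ 𝟙{x₁(t) < 0} du₁(t) = 0` and `∫₀^∞ 𝟙{x₂(t) < B} du₂(t) = 0`. -/
def IsRegulator (B : ℝ≥0∞) (x₁ x₂ u₁ u₂ : ℝ → ℝ) : Prop :=
  Cadlag u₁ ∧ Cadlag u₂ ∧ MonotoneOn u₁ (Set.Ici 0) ∧ MonotoneOn u₂ (Set.Ici 0) ∧
    (∀ t ≥ (0:ℝ), 0 ≤ u₁ t) ∧ (∀ t ≥ (0:ℝ), 0 ≤ u₂ t) ∧
    ZeroStieltjesOn u₁ {t | 0 ≤ t ∧ x₁ t < 0} ∧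
    ZeroStieltjesOn u₂ {t | 0 ≤ t ∧ ENNReal.ofReal (x₂ t) < B}
/-- `(w₁, w₂)` solves the unreflected auxiliary system with data
`(B, b₁, b₂, y₁, y₂)` (equations (20)-(21) of the paper). -/
def IsAuxSolution (B : ℝ≥0∞) (b₁ b₂ : ℝ) (y₁ y₂ w₁ w₂ : ℝ → ℝ) : Prop :=
  Cadlag w₁ ∧ Cadlag w₂ ∧
  (∀ t ≥ (0:ℝ), w₁ t =
      b₁ + y₁ t + ∫ s in (0:ℝ)..t, (-(phiR 0 w₁ s) + phiE B w₂ s)) ∧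
  (∀ t ≥ (0:ℝ), w₂ t =
      b₂ + y₂ t + psiR 0 w₁ t + ∫ s in (0:ℝ)..t, -(phiE B w₂ s)) ∧
  (∀ t ≥ (0:ℝ), 0 ≤ w₂ t)

open Topology

def BddOn (x : ℝ → ℝ) (t : ℝ) : Prop := ∃ M, ∀ s ∈ Icc (0:ℝ) t, |x s| ≤ M

section Bounded

variable {x x' : ℝ → ℝ} {κ κ' c s t : ℝ}

lemma BddOn.mono (h : BddOn x t) (hst : s ≤ t) : BddOn x s :=
  let ⟨M, hM⟩ := h; ⟨M, fun u hu => hM u ⟨hu.1, hu.2.trans hst⟩⟩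

lemma BddOn.sub (hx : BddOn x t) (hx' : BddOn x' t) : BddOn (fun s => x s - x' s) t :=
  let ⟨M, hM⟩ := hx; let ⟨M', hM'⟩ := hx'
  ⟨M + M', fun u hu => (abs_sub _ _).trans (add_le_add (hM u hu) (hM' u hu))⟩

lemma Cadlag.eventually_abs_le (hf : Cadlag x) (hs : 0 ≤ s) :
    ∃ C, ∀ᶠ u in 𝓝[Ici 0] s, |x u| ≤ C := by
  have hright : ∀ᶠ u in 𝓝[≥] s, |x u| ≤ |x s| + 1 :=
    ((hf.1 s hs).tendsto.abs.eventually_lt_const (lt_add_one _)).mono fun _ => le_of_lt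
  rcases hs.eq_or_lt with rfl | hs
  · exact ⟨_, hright⟩
  obtain ⟨L, hL⟩ := hf.2 s hs
  have hleft : ∀ᶠ u in 𝓝[<] s, |x u| ≤ |L| + 1 :=
    (hL.abs.eventually_lt_const (lt_add_one _)).mono fun _ => le_of_lt
  refine ⟨max (|x s| + 1) (|L| + 1), nhdsWithin_le_nhds ?_⟩
  rw [← nhdsLT_sup_nhdsGE]
  exact ⟨hleft.mono fun _ h => h.trans (le_max_right _ _),
    hright.mono fun _ h => h.trans (le_max_left _ _)⟩

lemma Cadlag.bddOn (hf : Cadlag x) (t : ℝ) : BddOn x t := by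
  refine isCompact_Icc.induction_on (p := fun U => ∃ M, ∀ u ∈ U, |x u| ≤ M) ⟨0, by simp⟩
    (fun _ _ hst ⟨M, hM⟩ => ⟨M, fun u hu => hM u (hst hu)⟩)
    (fun _ _ ⟨M, hM⟩ ⟨N, hN⟩ => ⟨max M N, fun u hu => hu.elim
      (fun h => (hM u h).trans (le_max_left _ _)) (fun h => (hN u h).trans (le_max_right _ _))⟩)
    fun s hs => ?_
  obtain ⟨C, hC⟩ := hf.eventually_abs_le hs.1
  exact ⟨_, nhdsWithin_mono _ Icc_subset_Ici_self hC, C, fun _ h => h⟩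

lemma le_unif (h : BddOn x t) (hs : s ∈ Icc (0:ℝ) t) : |x s| ≤ unif x t :=
  let ⟨M, hM⟩ := h
  le_ciSup (f := fun u : Icc (0:ℝ) t => |x u|) ⟨M, by rintro _ ⟨u, rfl⟩; exact hM u u.2⟩ ⟨s, hs⟩

lemma unif_le (ht : 0 ≤ t) (h : ∀ s ∈ Icc (0:ℝ) t, |x s| ≤ c) : unif x t ≤ c :=
  have : Nonempty (Icc (0:ℝ) t) := ⟨⟨0, le_rfl, ht⟩⟩
  ciSup_le fun s => h s s.2

lemma unif_nonneg : 0 ≤ unif x t := Real.iSup_nonneg fun _ => abs_nonneg _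

lemma unif_monotoneOn (h : BddOn x t) : MonotoneOn (unif x) (Icc 0 t) :=
  fun _ hs _ hu hsu => unif_le hs.1 fun _ hv => le_unif (h.mono hu.2) ⟨hv.1, hv.2.trans hsu⟩

lemma abs_add_le_abs_add_unif (h : BddOn x t) (hs : s ∈ Icc (0:ℝ) t) (d : ℝ) :
    |d + x s| ≤ |d| + unif x t :=
  (abs_add_le _ _).trans (add_le_add_right (le_unif h hs) _)

lemma psiR_nonneg : 0 ≤ psiR κ x t := Real.iSup_nonneg fun _ => le_max_right _ _

lemma le_psiR (h : BddOn x t) (hs : s ∈ Icc (0:ℝ) t) : x s - κ ≤ psiR κ x t :=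
  let ⟨M, hM⟩ := h
  (le_max_left _ _).trans <| le_ciSup (f := fun u : Icc (0:ℝ) t => max (x u - κ) 0)
    ⟨max (M - κ) 0, by
      rintro _ ⟨u, rfl⟩
      exact max_le_max_right _ (by linarith [(abs_le.1 (hM u u.2)).2])⟩ ⟨s, hs⟩

lemma psiR_le (ht : 0 ≤ t) (hc : 0 ≤ c) (h : ∀ s ∈ Icc (0:ℝ) t, x s - κ ≤ c) :
    psiR κ x t ≤ c :=
  have : Nonempty (Icc (0:ℝ) t) := ⟨⟨0, le_rfl, ht⟩⟩
  ciSup_le fun s => max_le (h s s.2) hc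

lemma psiR_eq_zero (ht : 0 ≤ t) (h : ∀ s ∈ Icc (0:ℝ) t, x s ≤ κ) : psiR κ x t = 0 :=
  (psiR_le ht le_rfl fun s hs => sub_nonpos.2 (h s hs)).antisymm psiR_nonneg

lemma psiR_monotoneOn (h : BddOn x t) : MonotoneOn (psiR κ x) (Icc 0 t) :=
  fun _ hs _ hu hsu => psiR_le hs.1 psiR_nonneg fun _ hv =>
    le_psiR (h.mono hu.2) ⟨hv.1, hv.2.trans hsu⟩

lemma BddOn.psiR (h : BddOn x t) : BddOn (psiR κ x) t := by
  obtain ⟨M, hM⟩ := h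
  refine ⟨max (M - κ) 0, fun s hs => ?_⟩
  rw [abs_of_nonneg psiR_nonneg]
  exact psiR_le hs.1 (le_max_right _ _) fun u hu =>
    (by linarith [(abs_le.1 (hM u ⟨hu.1, hu.2.trans hs.2⟩)).2] : x u - κ ≤ M - κ).trans
      (le_max_left _ _)

lemma abs_psiR_sub_psiR_le (ht : 0 ≤ t) (hx : BddOn x t) (hx' : BddOn x' t)
    (h : ∀ s ∈ Icc (0:ℝ) t, |(x' s - κ') - (x s - κ)| ≤ c) :
    |psiR κ' x' t - psiR κ x t| ≤ c := by
  have hc : 0 ≤ c := (abs_nonneg _).trans (h 0 ⟨le_rfl, ht⟩)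
  rw [abs_sub_le_iff, sub_le_iff_le_add, sub_le_iff_le_add]
  constructor
  · refine psiR_le ht (add_nonneg hc psiR_nonneg) fun s hs => ?_
    linarith [(abs_le.1 (h s hs)).2, le_psiR (κ := κ) hx hs]
  · refine psiR_le ht (add_nonneg hc psiR_nonneg) fun s hs => ?_
    linarith [(abs_le.1 (h s hs)).1, le_psiR (κ := κ') hx' hs]

lemma abs_psiR_sub_psiR_le_unif (ht : 0 ≤ t) (hx : BddOn x t) (hx' : BddOn x' t) :
    |psiR κ x' t - psiR κ x t| ≤ unif (fun s => x' s - x s) t :=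
  abs_psiR_sub_psiR_le ht hx hx' fun s hs => by
    simpa only [sub_sub_sub_cancel_right] using le_unif (hx'.sub hx) hs

end Bounded

section Reflection

variable {x x' : ℝ → ℝ} {κ κ' : ℝ≥0∞} {t : ℝ}

lemma psiE_top : psiE ⊤ x = 0 := if_pos rfl

lemma psiE_of_ne_top (hκ : κ ≠ ⊤) : psiE κ x = psiR κ.toReal x := if_neg hκ

lemma phiE_eq_sub (κ : ℝ≥0∞) (x : ℝ → ℝ) (t : ℝ) : phiE κ x t = x t - psiE κ x t := by
  unfold phiE psiE phiR
  split <;> simp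

lemma phiE_zero (x : ℝ → ℝ) : phiE 0 x = phiR 0 x := by simp [phiE]

lemma BddOn.psiE (h : BddOn x t) : BddOn (psiE κ x) t := by
  by_cases hκ : κ = ⊤
  · exact ⟨0, fun s _ => by simp [hκ, psiE_top]⟩
  · rw [psiE_of_ne_top hκ]; exact h.psiR

lemma abs_psiE_sub_psiE_le_unif (ht : 0 ≤ t) (hx : BddOn x t) (hx' : BddOn x' t) :
    |psiE κ x' t - psiE κ x t| ≤ unif (fun s => x' s - x s) t := by
  by_cases hκ : κ = ⊤
  · simpa [hκ, psiE_top] using unif_nonneg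
  · simpa only [psiE_of_ne_top hκ] using abs_psiR_sub_psiR_le_unif ht hx hx'

lemma abs_phiE_sub_phiE_le (ht : 0 ≤ t) (hx : BddOn x t) (hx' : BddOn x' t) :
    |phiE κ' x' t - phiE κ x t| ≤
      2 * unif (fun s => x' s - x s) t + |psiE κ' x t - psiE κ x t| := by
  have hdiff := le_unif (hx'.sub hx) ⟨ht, le_rfl⟩
  have hpsi := abs_psiE_sub_psiE_le_unif (κ := κ') ht hx hx'
  rw [phiE_eq_sub, phiE_eq_sub]
  calc _ = |(x' t - x t) - (psiE κ' x' t - psiE κ' x t) - (psiE κ' x t - psiE κ x t)| := by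
        ring_nf
    _ ≤ |x' t - x t| + |psiE κ' x' t - psiE κ' x t| + |psiE κ' x t - psiE κ x t| :=
        (abs_sub _ _).trans (add_le_add (abs_sub _ _) le_rfl)
    _ ≤ _ := by linarith

/-- At `κ₀ = ∞` the difference vanishes as soon as `κ` exceeds a bound of `x` on `[0, t]`;
otherwise `ψ` is 1-Lipschitz in the barrier. -/
lemma tendsto_unif_psiE_sub (hx : BddOn x t) (ht : 0 ≤ t) (κ₀ : ℝ≥0∞) :
    Tendsto (fun κ => unif (fun s => psiE κ x s - psiE κ₀ x s) t) (𝓝 κ₀) (𝓝 0) := by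
  by_cases hκ₀ : κ₀ = ⊤
  · subst hκ₀
    obtain ⟨M, hM⟩ := hx
    refine tendsto_const_nhds.congr' ?_
    filter_upwards [Ioi_mem_nhds (ENNReal.ofReal_lt_top (r := M))] with κ hκ
    have hzero : ∀ s ∈ Icc (0:ℝ) t, psiE κ x s = 0 := fun s hs => by
      by_cases hκt : κ = ⊤
      · simp [hκt, psiE_top]
      rw [psiE_of_ne_top hκt]
      refine psiR_eq_zero hs.1 fun u hu => ?_
      have hMκ : M < κ.toReal := (ENNReal.ofReal_lt_iff_lt_toReal
        ((abs_nonneg _).trans (hM 0 ⟨le_rfl, ht⟩)) hκt).1 hκ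
      linarith [(abs_le.1 (hM u ⟨hu.1, hu.2.trans hs.2⟩)).2]
    exact ((unif_le ht fun s hs => by simp [hzero s hs, psiE_top]).antisymm unif_nonneg).symm
  · have hreal : Tendsto (fun κ => |κ.toReal - κ₀.toReal|) (𝓝 κ₀) (𝓝 0) := by
      simpa using ((ENNReal.tendsto_toReal hκ₀).sub_const κ₀.toReal).abs
    refine squeeze_zero' (Eventually.of_forall fun _ => unif_nonneg) ?_ hreal
    filter_upwards [Iio_mem_nhds (lt_top_iff_ne_top.2 hκ₀)] with κ hκ
    refine unif_le ht fun s hs => ?_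
    rw [psiE_of_ne_top hκ.ne, psiE_of_ne_top hκ₀]
    exact abs_psiR_sub_psiR_le hs.1 (hx.mono hs.2) (hx.mono hs.2) fun u _ => by
      rw [sub_sub_sub_cancel_left, abs_sub_comm]

end Reflection

section Integrability

variable {x : ℝ → ℝ} {T : ℝ}

/-- The dyadic points `⌈2ᵏ s⁺⌉ / 2ᵏ` decrease to `s⁺`, so right-continuity makes `x (s⁺)` a
pointwise limit of functions of countable range. -/
lemma Cadlag.measurable_comp_max (hx : Cadlag x) : Measurable fun s => x (max s 0) := by
  set g : ℕ → ℝ → ℝ := fun k s => ⌈max s 0 * 2 ^ k⌉ / 2 ^ k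
  have hg_ge : ∀ k s, max s 0 ≤ g k s := fun k s => by
    rw [le_div_iff₀ (by positivity)]; exact Int.le_ceil _
  have hg_le : ∀ k s, g k s ≤ max s 0 + (1 / 2) ^ k := fun k s => by
    rw [div_le_iff₀ (by positivity), add_mul, div_pow, one_pow,
      div_mul_cancel₀ _ (by positivity)]
    exact (Int.ceil_lt_add_one _).le
  refine measurable_of_tendsto_metrizable (f := fun k s => x (g k s)) (fun k => ?_)
    (tendsto_pi_nhds.2 fun s => ?_)
  · exact (measurable_from_top (f := fun z : ℤ => x (z / 2 ^ k))).comp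
      (Int.measurable_ceil.comp ((measurable_id.max measurable_const).mul_const _))
  · have hlim : Tendsto (fun k => g k s) atTop (𝓝[≥] (max s 0)) := by
      refine tendsto_nhdsWithin_iff.2 ⟨?_, Eventually.of_forall fun k => hg_ge k s⟩
      refine tendsto_of_tendsto_of_tendsto_of_le_of_le tendsto_const_nhds ?_
        (hg_ge · s) (hg_le · s)
      simpa using tendsto_const_nhds.add
        (tendsto_pow_atTop_nhds_zero_of_lt_one (by norm_num : (0:ℝ) ≤ 1 / 2) (by norm_num))
    exact (hx.1 _ (le_max_right _ _)).tendsto.comp hlim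

lemma Cadlag.integrableOn_Icc (hx : Cadlag x) (T : ℝ) : IntegrableOn x (Icc 0 T) := by
  obtain ⟨M, hM⟩ := hx.bddOn T
  refine Integrable.of_bound ?_ M ((ae_restrict_mem measurableSet_Icc).mono hM)
  exact hx.measurable_comp_max.aestronglyMeasurable.congr
    ((ae_restrict_mem measurableSet_Icc).mono fun s hs => by simp only [max_eq_left hs.1])

lemma Cadlag.integrableOn_phiR (hx : Cadlag x) (κ T : ℝ) :
    IntegrableOn (phiR κ x) (Icc 0 T) :=
  (hx.integrableOn_Icc T).sub
    ((psiR_monotoneOn (hx.bddOn T)).integrableOn_isCompact isCompact_Icc)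

lemma Cadlag.integrableOn_phiE (hx : Cadlag x) (κ : ℝ≥0∞) (T : ℝ) :
    IntegrableOn (phiE κ x) (Icc 0 T) := by
  unfold phiE
  split
  · exact hx.integrableOn_Icc T
  · exact hx.integrableOn_phiR _ T

lemma Cadlag.intervalIntegrable_phiR (hx : Cadlag x) (κ : ℝ) (hT : 0 ≤ T) :
    IntervalIntegrable (phiR κ x) volume 0 T :=
  (intervalIntegrable_iff_integrableOn_Icc_of_le hT).2 (hx.integrableOn_phiR κ T)

lemma Cadlag.intervalIntegrable_phiE (hx : Cadlag x) (κ : ℝ≥0∞) (hT : 0 ≤ T) :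
    IntervalIntegrable (phiE κ x) volume 0 T :=
  (intervalIntegrable_iff_integrableOn_Icc_of_le hT).2 (hx.integrableOn_phiE κ T)

end Integrability

section Continuity

variable {x g : ℝ → ℝ} {κ : ℝ}

/-- Reparametrising `[0, t]` as `t • [0, 1]` turns the running supremum into a supremum over
a fixed compact set of a jointly continuous function. -/
lemma continuousOn_psiR (hx : ContinuousOn x (Ici 0)) : ContinuousOn (psiR κ x) (Ici 0) := by
  set g : ℝ → ℝ := fun s => max (x (max s 0) - κ) 0
  have hg : Continuous g :=
    ((hx.comp_continuous (continuous_id.max continuous_const) fun s => le_max_right s 0).sub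
      continuous_const).max continuous_const
  have hsup : Continuous fun t => sSup ((fun u => g (t * u)) '' Icc 0 1) :=
    isCompact_Icc.continuous_sSup (by fun_prop)
  refine hsup.continuousOn.congr fun t (ht : 0 ≤ t) => ?_
  show psiR κ x t = sSup ((fun u => g (t * u)) '' Icc 0 1)
  rw [← image_image g (t * ·), image_mul_left_Icc ht zero_le_one, mul_zero, mul_one, sSup_image']
  exact iSup_congr fun s => by simp only [g, max_eq_left s.2.1]

lemma continuousOn_primitive_Ici (hg : ∀ T, IntegrableOn g (Icc 0 T)) :
    ContinuousOn (fun t => ∫ s in (0:ℝ)..t, g s) (Ici 0) := by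
  intro t ht
  have hcont := intervalIntegral.continuousOn_primitive_interval (μ := volume) (a := 0)
    (b := t + 1) (by rw [uIcc_of_le (by linarith [ht.out])]; exact hg _)
  rw [uIcc_of_le (by linarith [ht.out])] at hcont
  refine (hcont t ⟨ht, by linarith⟩).mono_of_mem_nhdsWithin ?_
  rw [← Ici_inter_Iic]
  exact inter_mem_nhdsWithin _ (Iic_mem_nhds (by linarith))

end Continuity

lemma MonotoneOn.integral_le_sub_mul {f : ℝ → ℝ} {a b : ℝ} (hf : MonotoneOn f (Icc a b))
    (hab : a ≤ b) : ∫ s in a..b, f s ≤ (b - a) * f b := by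
  simpa using intervalIntegral.integral_mono_on hab
    (hf.mono (uIcc_of_le hab).subset).intervalIntegrable (intervalIntegrable_const (μ := volume))
    fun _ hs => hf hs ⟨hab, le_rfl⟩ hs.2

/-- Gronwall's inequality for a monotone function, via `le_gronwallBound_of_liminf_deriv_right_le`
applied to the right-hand side `A + K ∫₀ᵗ f`, whose right difference quotients are at most
`K f(z)` for `z > t`. -/
lemma le_mul_exp_of_le_add_integral {f : ℝ → ℝ} {A K T : ℝ} (hK : 0 ≤ K)
    (hf : MonotoneOn f (Icc 0 T)) (h : ∀ t ∈ Icc (0:ℝ) T, f t ≤ A + K * ∫ s in (0:ℝ)..t, f s) :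
    ∀ t ∈ Icc (0:ℝ) T, f t ≤ A * Real.exp (K * t) := by
  intro t ht
  set g : ℝ → ℝ := fun t => A + K * ∫ s in (0:ℝ)..t, f s
  have hT : 0 ≤ T := ht.1.trans ht.2
  have hint : ∀ a b, 0 ≤ a → a ≤ b → b ≤ T → IntervalIntegrable f volume a b :=
    fun a b ha hab hb =>
      (hf.mono (by rw [uIcc_of_le hab]; exact Icc_subset_Icc ha hb)).intervalIntegrable
  have hg : ContinuousOn g (Icc 0 T) := by
    have := intervalIntegral.continuousOn_primitive_interval (μ := volume) (a := 0) (b := T)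
      (by rw [uIcc_of_le hT]; exact hf.integrableOn_isCompact isCompact_Icc)
    rw [uIcc_of_le hT] at this
    exact continuousOn_const.add (continuousOn_const.mul this)
  have hderiv : ∀ t ∈ Ico (0:ℝ) T, ∀ r, K * g t < r →
      ∃ᶠ z in 𝓝[>] t, (z - t)⁻¹ * (g z - g t) < r := by
    intro t ht r hr
    have hgt : ContinuousWithinAt g (Ioi t) t :=
      (hg t (Ico_subset_Icc_self ht)).mono_of_mem_nhdsWithin
        (mem_of_superset (Ioo_mem_nhdsGT ht.2) fun z hz => ⟨ht.1.trans hz.1.le, hz.2.le⟩)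
    refine ((((hgt.tendsto.const_mul K).eventually_lt_const hr).and
      (Ioo_mem_nhdsGT ht.2)).mono fun z ⟨hzr, hz⟩ => ?_).frequently
    have hzT : z ∈ Icc (0:ℝ) T := ⟨ht.1.trans hz.1.le, hz.2.le⟩
    have hincr := (hf.mono (Icc_subset_Icc ht.1 hz.2.le)).integral_le_sub_mul hz.1.le
    have hgz : g z - g t = K * ∫ s in t..z, f s := by
      simp only [g, ← intervalIntegral.integral_interval_sub_left
        (hint 0 z le_rfl hzT.1 hzT.2) (hint 0 t le_rfl ht.1 ht.2.le)]
      ring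
    have hzt : 0 < z - t := sub_pos.2 hz.1
    calc (z - t)⁻¹ * (g z - g t) ≤ (z - t)⁻¹ * (K * ((z - t) * f z)) := by
          rw [hgz]; gcongr
      _ = K * f z := by field_simp
      _ ≤ K * g z := mul_le_mul_of_nonneg_left (h z hzT) hK
      _ < r := hzr
  have := le_gronwallBound_of_liminf_deriv_right_le (δ := A) (ε := 0) hg hderiv
    (by simp [g]) (fun _ _ => (add_zero _).ge) t ht
  rw [gronwallBound_ε0, sub_zero] at this
  exact (h t ht).trans this

lemma abs_integral_sub_integral_le {g g' G : ℝ → ℝ} {s t : ℝ} (hs : 0 ≤ s) (hst : s ≤ t)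
    (hg : IntervalIntegrable g volume 0 s) (hg' : IntervalIntegrable g' volume 0 s)
    (hG : IntervalIntegrable G volume 0 t) (hG0 : ∀ u ∈ Icc (0:ℝ) t, 0 ≤ G u)
    (h : ∀ u ∈ Icc (0:ℝ) s, |g' u - g u| ≤ G u) :
    |(∫ u in (0:ℝ)..s, g' u) - ∫ u in (0:ℝ)..s, g u| ≤ ∫ u in (0:ℝ)..t, G u := by
  rw [← intervalIntegral.integral_sub hg' hg]
  refine (intervalIntegral.norm_integral_le_of_norm_le hs
    (f := fun u => g' u - g u) (ae_of_all _ fun u hu => h u (Ioc_subset_Icc_self hu))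
    (hG.mono_set ?_)).trans
    (intervalIntegral.integral_mono_interval le_rfl hs hst
      ((ae_restrict_mem measurableSet_Ioc).mono fun u hu => hG0 u (Ioc_subset_Icc_self hu)) hG)
  rw [uIcc_of_le hs, uIcc_of_le (hs.trans hst)]
  exact Icc_subset_Icc le_rfl hst

def unifPair (w₁ w₂ w₁' w₂' : ℝ → ℝ) (t : ℝ) : ℝ :=
  unif (fun s => w₁' s - w₁ s) t + unif (fun s => w₂' s - w₂ s) t

section Stability

variable {B B' : ℝ≥0∞} {b₁ b₂ b₁' b₂' a₁ a₂ c t : ℝ} {y₁ y₂ y₁' y₂' w₁ w₂ w₁' w₂' : ℝ → ℝ}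

lemma unifPair_nonneg : 0 ≤ unifPair w₁ w₂ w₁' w₂' t := add_nonneg unif_nonneg unif_nonneg

lemma unifPair_monotoneOn (hw₁ : Cadlag w₁) (hw₂ : Cadlag w₂) (hw₁' : Cadlag w₁')
    (hw₂' : Cadlag w₂') : MonotoneOn (unifPair w₁ w₂ w₁' w₂') (Icc 0 t) :=
  (unif_monotoneOn ((hw₁'.bddOn t).sub (hw₁.bddOn t))).add
    (unif_monotoneOn ((hw₂'.bddOn t).sub (hw₂.bddOn t)))

lemma intervalIntegrable_unifPair (hw₁ : Cadlag w₁) (hw₂ : Cadlag w₂) (hw₁' : Cadlag w₁')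
    (hw₂' : Cadlag w₂') (ht : 0 ≤ t) :
    IntervalIntegrable (unifPair w₁ w₂ w₁' w₂') volume 0 t :=
  (unifPair_monotoneOn hw₁ hw₂ hw₁' hw₂').mono (uIcc_of_le ht).subset |>.intervalIntegrable

lemma intervalIntegrable_two_mul_unifPair_add (hw₁ : Cadlag w₁) (hw₂ : Cadlag w₂)
    (hw₁' : Cadlag w₁') (hw₂' : Cadlag w₂') (ht : 0 ≤ t) (c : ℝ) :
    IntervalIntegrable (fun u => 2 * unifPair w₁ w₂ w₁' w₂' u + c) volume 0 t :=
  ((intervalIntegrable_unifPair hw₁ hw₂ hw₁' hw₂' ht).const_mul 2).add intervalIntegrable_const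

lemma unif_sub_fst_le (hsol : IsAuxSolution B b₁ b₂ y₁ y₂ w₁ w₂)
    (hsol' : IsAuxSolution B' b₁' b₂' y₁' y₂' w₁' w₂') (ht : 0 ≤ t)
    (ha₁ : ∀ s ∈ Icc (0:ℝ) t, |b₁' - b₁ + (y₁' s - y₁ s)| ≤ a₁)
    (hc : ∀ s ∈ Icc (0:ℝ) t, |psiE B' w₂ s - psiE B w₂ s| ≤ c) :
    unif (fun s => w₁' s - w₁ s) t ≤
      a₁ + ∫ u in (0:ℝ)..t, (2 * unifPair w₁ w₂ w₁' w₂' u + c) := by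
  obtain ⟨hw₁, hw₂, heq₁, -⟩ := hsol
  obtain ⟨hw₁', hw₂', heq₁', -⟩ := hsol'
  have hc0 : 0 ≤ c := (abs_nonneg _).trans (hc 0 ⟨le_rfl, ht⟩)
  have hdrift : ∀ u ∈ Icc (0:ℝ) t, |(-(phiR 0 w₁' u) + phiE B' w₂' u) -
      (-(phiR 0 w₁ u) + phiE B w₂ u)| ≤ 2 * unifPair w₁ w₂ w₁' w₂' u + c := fun u hu => by
    have hφ₁ := abs_phiE_sub_phiE_le (κ := 0) (κ' := 0) hu.1 (hw₁.bddOn u) (hw₁'.bddOn u)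
    have hφ₂ := abs_phiE_sub_phiE_le (κ := B) (κ' := B') hu.1 (hw₂.bddOn u) (hw₂'.bddOn u)
    rw [sub_self, abs_zero, add_zero, phiE_zero, phiE_zero] at hφ₁
    have := hc u hu
    have := abs_sub_le_iff.1 hφ₁; have := abs_sub_le_iff.1 hφ₂
    rw [abs_le]; unfold unifPair; constructor <;> linarith
  refine unif_le ht fun s hs => ?_
  have hint := abs_integral_sub_integral_le hs.1 hs.2
    ((hw₁.intervalIntegrable_phiR 0 hs.1).neg.add (hw₂.intervalIntegrable_phiE B hs.1))
    ((hw₁'.intervalIntegrable_phiR 0 hs.1).neg.add (hw₂'.intervalIntegrable_phiE B' hs.1))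
    (intervalIntegrable_two_mul_unifPair_add hw₁ hw₂ hw₁' hw₂' ht c)
    (fun _ _ => add_nonneg (mul_nonneg zero_le_two unifPair_nonneg) hc0)
    fun u hu => hdrift u ⟨hu.1, hu.2.trans hs.2⟩
  rw [heq₁' s hs.1, heq₁ s hs.1]
  calc _ = |(b₁' - b₁ + (y₁' s - y₁ s)) + ((∫ u in (0:ℝ)..s, -(phiR 0 w₁' u) + phiE B' w₂' u)
        - ∫ u in (0:ℝ)..s, -(phiR 0 w₁ u) + phiE B w₂ u)| := by ring_nf
    _ ≤ _ := (abs_add_le _ _).trans (add_le_add (ha₁ s hs) hint)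

lemma unif_sub_snd_le (hsol : IsAuxSolution B b₁ b₂ y₁ y₂ w₁ w₂)
    (hsol' : IsAuxSolution B' b₁' b₂' y₁' y₂' w₁' w₂') (ht : 0 ≤ t)
    (ha₂ : ∀ s ∈ Icc (0:ℝ) t, |b₂' - b₂ + (y₂' s - y₂ s)| ≤ a₂)
    (hc : ∀ s ∈ Icc (0:ℝ) t, |psiE B' w₂ s - psiE B w₂ s| ≤ c) :
    unif (fun s => w₂' s - w₂ s) t ≤ a₂ + unif (fun s => w₁' s - w₁ s) t +
      ∫ u in (0:ℝ)..t, (2 * unifPair w₁ w₂ w₁' w₂' u + c) := by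
  obtain ⟨hw₁, hw₂, -, heq₂, -⟩ := hsol
  obtain ⟨hw₁', hw₂', -, heq₂', -⟩ := hsol'
  have hc0 : 0 ≤ c := (abs_nonneg _).trans (hc 0 ⟨le_rfl, ht⟩)
  have hdrift : ∀ u ∈ Icc (0:ℝ) t, |-(phiE B' w₂' u) - -(phiE B w₂ u)| ≤
      2 * unifPair w₁ w₂ w₁' w₂' u + c := fun u hu => by
    have hφ := abs_phiE_sub_phiE_le (κ := B) (κ' := B') hu.1 (hw₂.bddOn u) (hw₂'.bddOn u)
    have := hc u hu
    have : 0 ≤ unif (fun s => w₁' s - w₁ s) u := unif_nonneg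
    rw [neg_sub_neg, abs_sub_comm]; unfold unifPair; linarith
  refine unif_le ht fun s hs => ?_
  have hψ : |psiR 0 w₁' s - psiR 0 w₁ s| ≤ unif (fun s => w₁' s - w₁ s) t :=
    (abs_psiR_sub_psiR_le_unif hs.1 (hw₁.bddOn s) (hw₁'.bddOn s)).trans
      (unif_monotoneOn ((hw₁'.bddOn t).sub (hw₁.bddOn t)) ⟨hs.1, hs.2⟩ ⟨ht, le_rfl⟩ hs.2)
  have hint := abs_integral_sub_integral_le hs.1 hs.2
    (hw₂.intervalIntegrable_phiE B hs.1).neg (hw₂'.intervalIntegrable_phiE B' hs.1).neg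
    (intervalIntegrable_two_mul_unifPair_add hw₁ hw₂ hw₁' hw₂' ht c)
    (fun _ _ => add_nonneg (mul_nonneg zero_le_two unifPair_nonneg) hc0)
    fun u hu => hdrift u ⟨hu.1, hu.2.trans hs.2⟩
  rw [heq₂' s hs.1, heq₂ s hs.1]
  calc _ = |(b₂' - b₂ + (y₂' s - y₂ s)) + (psiR 0 w₁' s - psiR 0 w₁ s) +
        ((∫ u in (0:ℝ)..s, -(phiE B' w₂' u)) - ∫ u in (0:ℝ)..s, -(phiE B w₂ u))| := by ring_nf
    _ ≤ _ := (abs_add_le _ _).trans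
        (add_le_add ((abs_add_le _ _).trans (add_le_add (ha₂ s hs) hψ)) hint)

/-- The two component bounds add up to `P ≤ (2 a₁ + a₂ + 3 c t) + 6 ∫₀ˢ P` for
`P = unifPair w₁ w₂ w₁' w₂'`, to which Gronwall's inequality applies. -/
theorem unifPair_le (hsol : IsAuxSolution B b₁ b₂ y₁ y₂ w₁ w₂)
    (hsol' : IsAuxSolution B' b₁' b₂' y₁' y₂' w₁' w₂') (ht : 0 ≤ t)
    (ha₁ : ∀ s ∈ Icc (0:ℝ) t, |b₁' - b₁ + (y₁' s - y₁ s)| ≤ a₁)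
    (ha₂ : ∀ s ∈ Icc (0:ℝ) t, |b₂' - b₂ + (y₂' s - y₂ s)| ≤ a₂)
    (hc : ∀ s ∈ Icc (0:ℝ) t, |psiE B' w₂ s - psiE B w₂ s| ≤ c) :
    unifPair w₁ w₂ w₁' w₂' t ≤ (2 * a₁ + a₂ + 3 * c * t) * Real.exp (6 * t) := by
  have hc0 : 0 ≤ c := (abs_nonneg _).trans (hc 0 ⟨le_rfl, ht⟩)
  refine le_mul_exp_of_le_add_integral (by norm_num : (0:ℝ) ≤ 6)
    (unifPair_monotoneOn hsol.1 hsol.2.1 hsol'.1 hsol'.2.1) (fun s hs => ?_) t ⟨ht, le_rfl⟩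
  have hsub : Icc (0:ℝ) s ⊆ Icc 0 t := Icc_subset_Icc le_rfl hs.2
  have h₁ := unif_sub_fst_le hsol hsol' hs.1 (fun u hu => ha₁ u (hsub hu))
    fun u hu => hc u (hsub hu)
  have h₂ := unif_sub_snd_le hsol hsol' hs.1 (fun u hu => ha₂ u (hsub hu))
    fun u hu => hc u (hsub hu)
  have hP := intervalIntegrable_unifPair hsol.1 hsol.2.1 hsol'.1 hsol'.2.1 hs.1
  have hI : ∫ u in (0:ℝ)..s, (2 * unifPair w₁ w₂ w₁' w₂' u + c) =
      2 * (∫ u in (0:ℝ)..s, unifPair w₁ w₂ w₁' w₂' u) + c * s := by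
    rw [intervalIntegral.integral_add (hP.const_mul 2) intervalIntegrable_const,
      intervalIntegral.integral_const_mul, intervalIntegral.integral_const, smul_eq_mul, sub_zero,
      mul_comm s]
  have hcs : c * s ≤ c * t := mul_le_mul_of_nonneg_left hs.2 hc0
  rw [hI] at h₁ h₂
  unfold unifPair at *
  linarith

end Stability

lemma IsAuxSolution.continuousOn {B : ℝ≥0∞} {b₁ b₂ : ℝ} {y₁ y₂ w₁ w₂ : ℝ → ℝ}
    (hsol : IsAuxSolution B b₁ b₂ y₁ y₂ w₁ w₂) (hy₁ : ContinuousOn y₁ (Ici 0))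
    (hy₂ : ContinuousOn y₂ (Ici 0)) : ContinuousOn w₁ (Ici 0) ∧ ContinuousOn w₂ (Ici 0) := by
  obtain ⟨hw₁, hw₂, heq₁, heq₂, -⟩ := hsol
  have hw₁c : ContinuousOn w₁ (Ici 0) :=
    ((continuousOn_const.add hy₁).add (continuousOn_primitive_Ici fun T =>
      (hw₁.integrableOn_phiR 0 T).neg.add (hw₂.integrableOn_phiE B T))).congr heq₁
  exact ⟨hw₁c, (((continuousOn_const.add hy₂).add (continuousOn_psiR hw₁c)).add
    (continuousOn_primitive_Ici fun T => (hw₂.integrableOn_phiE B T).neg)).congr heq₂⟩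

/-- **Continuity of the auxiliary solution map `ξ : [0,∞] × ℝ² × D² → D²`, and
preservation of continuity.**  If `Bⁿ → B` in `[0,∞]` (order topology),
`bⁿ → b` in `ℝ²`, and `yⁿ → y` uniformly on bounded intervals, then
`wⁿ = ξ(Bⁿ,bⁿ,yⁿ) → w = ξ(B,b,y)` uniformly on bounded intervals; moreover if
`y` is continuous then so is `w`. -/
theorem aux_solution_map_continuous
    (Bs : ℕ → ℝ≥0∞) (B : ℝ≥0∞) (bs₁ bs₂ : ℕ → ℝ) (b₁ b₂ : ℝ)
    (ys₁ ys₂ : ℕ → ℝ → ℝ) (y₁ y₂ : ℝ → ℝ)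
    (hys : ∀ n, Cadlag (ys₁ n) ∧ Cadlag (ys₂ n)) (hy₁ : Cadlag y₁) (hy₂ : Cadlag y₂)
    (ws₁ ws₂ : ℕ → ℝ → ℝ) (w₁ w₂ : ℝ → ℝ)
    (hsols : ∀ n, IsAuxSolution (Bs n) (bs₁ n) (bs₂ n) (ys₁ n) (ys₂ n) (ws₁ n) (ws₂ n))
    (hsol : IsAuxSolution B b₁ b₂ y₁ y₂ w₁ w₂)
    (hB : Tendsto Bs atTop (nhds B))
    (hb₁ : Tendsto bs₁ atTop (nhds b₁)) (hb₂ : Tendsto bs₂ atTop (nhds b₂))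
    (hyconv₁ : ∀ t ≥ (0:ℝ),
      Tendsto (fun n => unif (fun s => ys₁ n s - y₁ s) t) atTop (nhds 0))
    (hyconv₂ : ∀ t ≥ (0:ℝ),
      Tendsto (fun n => unif (fun s => ys₂ n s - y₂ s) t) atTop (nhds 0)) :
    ((∀ t ≥ (0:ℝ),
        Tendsto (fun n => unif (fun s => ws₁ n s - w₁ s) t) atTop (nhds 0)) ∧
      (∀ t ≥ (0:ℝ),
        Tendsto (fun n => unif (fun s => ws₂ n s - w₂ s) t) atTop (nhds 0))) ∧
    (ContinuousOn y₁ (Set.Ici 0) → ContinuousOn y₂ (Set.Ici 0) →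
      ContinuousOn w₁ (Set.Ici 0) ∧ ContinuousOn w₂ (Set.Ici 0)) := by
  have hpair : ∀ t ≥ (0:ℝ), Tendsto (fun n => unifPair w₁ w₂ (ws₁ n) (ws₂ n) t) atTop (𝓝 0) := by
    intro t ht
    have hw₂ := hsol.2.1.bddOn t
    have hbound : Tendsto (fun n => (2 * (|bs₁ n - b₁| + unif (fun s => ys₁ n s - y₁ s) t)
        + (|bs₂ n - b₂| + unif (fun s => ys₂ n s - y₂ s) t)
        + 3 * unif (fun s => psiE (Bs n) w₂ s - psiE B w₂ s) t * t) * Real.exp (6 * t))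
        atTop (𝓝 0) := by
      simpa using (((((tendsto_iff_norm_sub_tendsto_zero.1 hb₁).add (hyconv₁ t ht)).const_mul 2).add
        ((tendsto_iff_norm_sub_tendsto_zero.1 hb₂).add (hyconv₂ t ht))).add
        ((((tendsto_unif_psiE_sub hw₂ ht B).comp hB).const_mul 3).mul_const t)).mul_const
          (Real.exp (6 * t))
    refine squeeze_zero (fun _ => unifPair_nonneg) (fun n => unifPair_le hsol (hsols n) ht
      (fun s hs => abs_add_le_abs_add_unif (((hys n).1.bddOn t).sub (hy₁.bddOn t)) hs _)
      (fun s hs => abs_add_le_abs_add_unif (((hys n).2.bddOn t).sub (hy₂.bddOn t)) hs _)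
      fun s hs => le_unif (hw₂.psiE.sub hw₂.psiE) hs) hbound
  exact ⟨⟨fun t ht => squeeze_zero (fun _ => unif_nonneg)
      (fun _ => le_add_of_nonneg_right unif_nonneg) (hpair t ht),
    fun t ht => squeeze_zero (fun _ => unif_nonneg)
      (fun _ => le_add_of_nonneg_left unif_nonneg) (hpair t ht)⟩, hsol.continuousOn⟩
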